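/- arXiv:1102.2878 — 2 statements merged into one kernel-verified Lean document; each statement's English description precedes it below -/
import Mathlib

section
/- Let D ≥ 1, h > 0, and t, t₀, s ∈ ℝᴰ. Then the multivariate local (dual) Hermite expansion holds: e^{−‖t − s‖²/(2h²)} = Σ_{β ∈ ℕᴰ} ((−1)^{|β|}/β!) h_β((t₀ − s)/√(2h²)) ((t − t₀)/√(2h²))^β, where ‖·‖ is the Euclidean norm and the multi-index series converges (e.g., the family is summable). -/
/-! The Gaussian factorizes over the coordinates, and in each coordinate the claim is the Taylor
expansion of `x ↦ e^{-x²}` at `a = (t₀ - s)/√(2h²)`, because `(-1)ⁿ hₙ(a)` is its `n`-th derivative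
at `a`; that expansion converges on all of `ℝ` since `z ↦ e^{-z²}` is entire. A finite product of
absolutely convergent series is the series of products over multi-indices. -/

open Finset

/-- The `n`-th Hermite function: `hₙ(t) = (−1)ⁿ (dⁿ/dtⁿ) e^{−t²}`. -/
noncomputable def hermiteFun (n : ℕ) (t : ℝ) : ℝ :=
  (-1 : ℝ) ^ n * iteratedDeriv n (fun x => Real.exp (-x ^ 2)) t

/-- Multivariate Hermite function `h_β(x) = ∏_{d} h_{β[d]}(x[d])`. -/
noncomputable def hermiteFunMulti {D : ℕ} (β : Fin D → ℕ) (x : Fin D → ℝ) : ℝ :=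
  ∏ d, hermiteFun (β d) (x d)

/-- Multi-index factorial `β! = ∏_d (β[d])!`. -/
def mFactorial {D : ℕ} (β : Fin D → ℕ) : ℕ := ∏ d, Nat.factorial (β d)

/-- Multi-index power `x^β = ∏_d (x[d])^{β[d]}`. -/
def mPow {D : ℕ} (x : Fin D → ℝ) (β : Fin D → ℕ) : ℝ := ∏ d, (x d) ^ (β d)

/-- Multi-index degree `|β| = Σ_d β[d]`. -/
def mDeg {D : ℕ} (β : Fin D → ℕ) : ℕ := ∑ d, β d

lemma iteratedDeriv_ofReal_of_entire_extension {F : ℂ → ℂ} {f : ℝ → ℝ}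
    (hF : Differentiable ℂ F) (hf : ContDiff ℝ ⊤ f) (hFf : ∀ x : ℝ, F x = f x) (n : ℕ) (x : ℝ) :
    iteratedDeriv n F x = iteratedDeriv n f x := by
  induction n generalizing x with
  | zero => exact hFf x
  | succ n ih =>
    have hFn : HasDerivAt (fun y : ℝ => iteratedDeriv n F y) (iteratedDeriv (n + 1) F x) x := by
      rw [iteratedDeriv_succ]
      exact ((hF.contDiff (n := ⊤)).differentiable_iteratedDeriv n
        (WithTop.coe_lt_top _) x).hasDerivAt.comp_ofReal
    have hfn : HasDerivAt (fun y : ℝ => ((iteratedDeriv n f y : ℝ) : ℂ))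
        ((iteratedDeriv (n + 1) f x : ℝ) : ℂ) x := by
      rw [iteratedDeriv_succ]
      exact (hf.differentiable_iteratedDeriv n (WithTop.coe_lt_top _) x).hasDerivAt.ofReal_comp
    simp only [ih] at hFn
    exact hFn.unique hfn

lemma hasSum_taylorSeries_of_entire_extension {F : ℂ → ℂ} {f : ℝ → ℝ}
    (hF : Differentiable ℂ F) (hf : ContDiff ℝ ⊤ f) (hFf : ∀ x : ℝ, F x = f x) (a x : ℝ) :
    HasSum (fun n => iteratedDeriv n f a / (n.factorial : ℝ) * x ^ n) (f (a + x)) := by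
  have hTaylor := Complex.hasSum_taylorSeries_of_entire hF a (a + x : ℝ)
  rw [hFf, Complex.ofReal_add, add_sub_cancel_left] at hTaylor
  rw [← Complex.hasSum_ofReal]
  refine hTaylor.congr_fun fun n => ?_
  rw [iteratedDeriv_ofReal_of_entire_extension hF hf hFf, smul_eq_mul, smul_eq_mul]
  push_cast
  ring

lemma hasSum_hermiteFun_mul_pow (a x : ℝ) :
    HasSum (fun n => (-1) ^ n / (n.factorial : ℝ) * hermiteFun n a * x ^ n)
      (Real.exp (-(a + x) ^ 2)) := by
  have hTaylor := hasSum_taylorSeries_of_entire_extension (F := fun z => Complex.exp (-z ^ 2))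
    (f := fun y => Real.exp (-y ^ 2)) (by fun_prop) (by fun_prop) (fun x => by push_cast; rfl) a x
  convert hTaylor using 2 with n
  have hsign : ((-1 : ℝ) ^ n) * (-1) ^ n = 1 := by rw [← mul_pow]; norm_num
  rw [hermiteFun, div_mul_eq_mul_div, ← mul_assoc, hsign]
  ring

theorem HasSum.prod_fin_pi {𝕜 κ : Type*} [RCLike 𝕜] {n : ℕ} {f : Fin n → κ → 𝕜} {a : Fin n → 𝕜}
    (hf : ∀ i, HasSum (f i) (a i)) :
    HasSum (fun β : Fin n → κ => ∏ i, f i (β i)) (∏ i, a i) := by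
  induction n with
  | zero => simp
  | succ n ih =>
    have hrest : HasSum (fun β : Fin n → κ => ∏ i, f i.succ (β i)) (∏ i : Fin n, a i.succ) :=
      ih fun i => hf i.succ
    have hsummable := summable_mul_of_summable_norm
      (summable_norm_iff (E := 𝕜) |>.mpr (hf 0).summable)
      (summable_norm_iff (E := 𝕜) |>.mpr hrest.summable)
    refine (Fin.consEquiv fun _ => κ).hasSum_iff.mp ?_
    rw [Fin.prod_univ_succ]
    refine ((hf 0).mul hrest hsummable).congr_fun fun p => ?_
    simp [Fin.consEquiv, Fin.prod_univ_succ]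

lemma neg_one_pow_mDeg_div_mFactorial_mul {D : ℕ} (β : Fin D → ℕ) (a x : Fin D → ℝ) :
    (-1 : ℝ) ^ mDeg β / (mFactorial β : ℝ) * hermiteFunMulti β a * mPow x β
      = ∏ d, (-1) ^ β d / ((β d).factorial : ℝ) * hermiteFun (β d) (a d) * x d ^ β d := by
  simp only [prod_mul_distrib, prod_div_distrib, prod_pow_eq_pow_sum, mDeg, mFactorial, mPow,
    hermiteFunMulti, Nat.cast_prod]

theorem multivariate_local_expansion_general (D : ℕ) (h : ℝ)
    (t t₀ s : Fin D → ℝ) :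
    HasSum
      (fun β : Fin D → ℕ => ((-1 : ℝ) ^ (mDeg β) / (mFactorial β : ℝ)) *
        hermiteFunMulti β (fun d => (t₀ d - s d) / Real.sqrt (2 * h ^ 2)) *
        mPow (fun d => (t d - t₀ d) / Real.sqrt (2 * h ^ 2)) β)
      (Real.exp (-(∑ d, (t d - s d) ^ 2) / (2 * h ^ 2))) := by
  set c := Real.sqrt (2 * h ^ 2)
  have hc : c ^ 2 = 2 * h ^ 2 := Real.sq_sqrt (by positivity)
  have hexp : Real.exp (-(∑ d, (t d - s d) ^ 2) / (2 * h ^ 2))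
      = ∏ d, Real.exp (-((t₀ d - s d) / c + (t d - t₀ d) / c) ^ 2) := by
    rw [← Real.exp_sum, neg_div, sum_div, ← sum_neg_distrib, ← hc]
    congr! 2 with d
    rw [← add_div, ← div_pow]
    ring_nf
  rw [hexp]
  exact (HasSum.prod_fin_pi fun d => hasSum_hermiteFun_mul_pow _ _).congr_fun
    fun β => neg_one_pow_mDeg_div_mFactorial_mul β _ _

/-- Multivariate local (dual) Hermite expansion:
`e^{−‖t − s‖²/(2h²)} = Σ_{β ∈ ℕᴰ} ((−1)^{|β|}/β!) h_β((t₀ − s)/√(2h²)) ((t − t₀)/√(2h²))^β`,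
the multi-index family being summable. -/
theorem multivariate_local_expansion (D : ℕ) (hD : 1 ≤ D) (h : ℝ) (hh : 0 < h)
    (t t₀ s : Fin D → ℝ) :
    HasSum
      (fun β : Fin D → ℕ => ((-1 : ℝ) ^ (mDeg β) / (mFactorial β : ℝ)) *
        hermiteFunMulti β (fun d => (t₀ d - s d) / Real.sqrt (2 * h ^ 2)) *
        mPow (fun d => (t d - t₀ d) / Real.sqrt (2 * h ^ 2)) β)
      (Real.exp (-(∑ d, (t d - s d) ^ 2) / (2 * h ^ 2))) :=
  multivariate_local_expansion_general D h t t₀ s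
end

section
/- Let D ≥ 1, h > 0, 0 < ρ < 1, p ≥ 1 an integer, c ∈ ℝᴰ, and let r₁, …, r_N ∈ ℝᴰ be arbitrary. Define the direct local moments L_β = Σ_{j=1}^{N} ((−1)^{|β|}/β!) h_β((c − r_j)/√(2h²)) for each multi-index β ∈ ℕᴰ. Then for every q ∈ ℝᴰ with |q[d] − c[d]| < ρh for all 1 ≤ d ≤ D, | Σ_{β ∈ ℕᴰ, β[d] < p ∀d} L_β ((q − c)/√(2h²))^β − Σ_{j=1}^{N} e^{−‖q − r_j‖²/(2h²)} | ≤ (N/(1 − ρ)^D) Σ_{k=0}^{D−1} C(D,k) (1 − ρᵖ)ᵏ (ρᵖ/√(p!))^{D−k}, where ‖·‖ is the Euclidean norm and C(D,k) is the binomial coefficient. -/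
open Finset

/-!
The Hermite functions are the Taylor coefficients of the Gaussian at `t`:
`exp (-(t - s)²) = ∑ₙ sⁿ / n! · hₙ(t)`. After rescaling by `√(2h²)`, each summand
`exp (-‖q - rⱼ‖² / (2h²))` is a product over the coordinates of such Gaussians with `√2 |s| ≤ ρ`,
and the truncated local expansion is exactly the sum over `j` of the products of the partial
sums of order `p`.

Cramér's inequality `|hₙ(t)| ≤ √(2ⁿ n!)` bounds the `n`-th term by `ρⁿ / √(n!)`. It holds because
`exp (-t²)` is the Fourier transform of `g(x) = √π exp (-π² x²)`, so `‖∂ⁿ exp (-t²)‖` is at most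
the moment `∫ (2π|x|)ⁿ g(x) dx = 2ⁿ Γ((n+1)/2) / √π`, which Legendre's duplication formula bounds
by `√(2ⁿ n!)`. Hence every partial sum is bounded by `A = (1 - ρᵖ) / (1 - ρ)` and misses the
Gaussian by at most `E = ρᵖ / (√(p!) (1 - ρ))`; telescoping the product gives
`|∏ f - ∏ g| ≤ (A + E)ᴰ - Aᴰ`, whose binomial expansion is the stated bound.
-/

open MeasureTheory Complex FourierTransform
open scoped Real Nat

section RealRestriction

variable {f : ℂ → ℂ}

lemma iteratedDeriv_comp_ofReal (hf : Differentiable ℂ f) (n : ℕ) (t : ℝ) :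
    iteratedDeriv n (fun x : ℝ => f x) t = iteratedDeriv n f t := by
  induction n generalizing t with
  | zero => simp
  | succ n ih =>
    rw [iteratedDeriv_succ, iteratedDeriv_succ, funext ih]
    exact ((hf.contDiff.differentiable_iteratedDeriv n (WithTop.coe_lt_top _) t).hasDerivAt
      |>.comp_ofReal).deriv

lemma iteratedDeriv_re_comp_ofReal (hf : Differentiable ℂ f) (n : ℕ) (t : ℝ) :
    iteratedDeriv n (fun x : ℝ => (f x).re) t = (iteratedDeriv n f t).re := by
  induction n generalizing t with
  | zero => simp
  | succ n ih =>
    rw [iteratedDeriv_succ, iteratedDeriv_succ, funext ih]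
    exact ((hf.contDiff.differentiable_iteratedDeriv n (WithTop.coe_lt_top _) t).hasDerivAt
      |>.real_of_complex).deriv

lemma differentiable_cexp_neg_sq : Differentiable ℂ fun z : ℂ => cexp (-z ^ 2) := by
  fun_prop

lemma hermiteFun_eq_re (n : ℕ) (t : ℝ) :
    hermiteFun n t = ((-1) ^ n * iteratedDeriv n (fun z : ℂ => cexp (-z ^ 2)) t).re := by
  have hexp : (fun x : ℝ => Real.exp (-x ^ 2)) = fun x : ℝ => (cexp (-(x : ℂ) ^ 2)).re := by
    ext x
    rw [← ofReal_pow, ← ofReal_neg, exp_ofReal_re]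
  rw [hermiteFun, hexp, iteratedDeriv_re_comp_ofReal differentiable_cexp_neg_sq,
    ← re_ofReal_mul]
  push_cast
  rfl

lemma hasSum_hermiteFun (t s : ℝ) :
    HasSum (fun n : ℕ => s ^ n / n ! * hermiteFun n t) (Real.exp (-(t - s) ^ 2)) := by
  have h := (hasSum_taylorSeries_of_entire differentiable_cexp_neg_sq (t : ℂ) (t - s)).mapL reCLM
  convert h using 1
  · ext n
    rw [hermiteFun_eq_re, reCLM_apply, smul_eq_mul, smul_eq_mul, sub_sub_cancel_left, neg_pow,
      ← re_ofReal_mul]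
    push_cast
    ring_nf
  · rw [reCLM_apply, ← ofReal_sub, ← ofReal_pow, ← ofReal_neg, exp_ofReal_re]

end RealRestriction

lemma Real.Gamma_succ_div_two_le (n : ℕ) :
    Real.Gamma ((n + 1) / 2) ≤ √π * Real.Gamma (n / 2 + 1) := by
  induction n using Nat.twoStepInduction with
  | zero => norm_num [Real.Gamma_one_half_eq]
  | one =>
    rw [show ((1 : ℕ) + 1 : ℝ) / 2 = 1 by norm_num,
      show ((1 : ℕ) : ℝ) / 2 + 1 = 1 / 2 + 1 by norm_num,
      Real.Gamma_one, Real.Gamma_add_one (by norm_num), Real.Gamma_one_half_eq,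
      ← mul_assoc, mul_comm √π, mul_assoc, Real.mul_self_sqrt Real.pi_pos.le]
    linarith [Real.two_le_pi]
  | more n ih _ =>
    rw [show ((n + 2 : ℕ) + 1 : ℝ) / 2 = (n + 1) / 2 + 1 by push_cast; ring,
      show ((n + 2 : ℕ) : ℝ) / 2 + 1 = (n / 2 + 1) + 1 by push_cast; ring,
      Real.Gamma_add_one (by positivity), Real.Gamma_add_one (by positivity)]
    calc (n + 1) / 2 * Real.Gamma ((n + 1) / 2) ≤ (n / 2 + 1) * (√π * Real.Gamma (n / 2 + 1)) := by
          gcongr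
          linarith
      _ = √π * ((n / 2 + 1) * Real.Gamma (n / 2 + 1)) := by ring

lemma Real.Gamma_succ_div_two_sq_le (n : ℕ) :
    Real.Gamma ((n + 1) / 2) ^ 2 ≤ π * n ! / 2 ^ n := by
  have hdup := Real.Gamma_mul_Gamma_add_half ((n + 1) / 2)
  rw [show ((n : ℝ) + 1) / 2 + 1 / 2 = n / 2 + 1 by ring,
    show 2 * (((n : ℝ) + 1) / 2) = n + 1 by ring,
    show (1 : ℝ) - (n + 1) = -n by ring, Real.rpow_neg zero_le_two, Real.rpow_natCast,
    Real.Gamma_nat_eq_factorial] at hdup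
  calc Real.Gamma ((n + 1) / 2) ^ 2
      ≤ Real.Gamma ((n + 1) / 2) * (√π * Real.Gamma (n / 2 + 1)) := by
        rw [sq]
        exact mul_le_mul_of_nonneg_left (Real.Gamma_succ_div_two_le n)
          (Real.Gamma_pos_of_pos (by positivity)).le
    _ = π * n ! / 2 ^ n := by
        rw [mul_left_comm, hdup, ← mul_assoc, mul_comm √π, mul_assoc, mul_assoc,
          Real.mul_self_sqrt Real.pi_pos.le]
        field_simp

lemma integral_abs_pow_mul_exp_neg_mul_sq {b : ℝ} (hb : 0 < b) (n : ℕ) :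
    ∫ x : ℝ, |x| ^ n * Real.exp (-b * x ^ 2) =
      Real.Gamma ((n + 1) / 2) * b ^ (-((n : ℝ) + 1) / 2) := by
  have hpow : ∫ x in Set.Ioi (0 : ℝ), x ^ n * Real.exp (-b * x ^ 2) =
      ∫ x in Set.Ioi (0 : ℝ), x ^ (n : ℝ) * Real.exp (-b * x ^ (2 : ℝ)) := by
    norm_cast
  have habs : (fun x : ℝ => |x| ^ n * Real.exp (-b * x ^ 2)) =
      fun x => |x| ^ n * Real.exp (-b * |x| ^ 2) := by simp_rw [sq_abs]
  rw [habs, integral_comp_abs (f := fun x => x ^ n * Real.exp (-b * x ^ 2)), hpow,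
    _root_.integral_rpow_mul_exp_neg_mul_rpow two_pos (neg_one_lt_zero.trans_le n.cast_nonneg) hb]
  ring

lemma integrable_abs_pow_mul_exp_neg_mul_sq {b : ℝ} (hb : 0 < b) (n : ℕ) :
    Integrable fun x : ℝ => |x| ^ n * Real.exp (-b * x ^ 2) := by
  refine (integrable_rpow_mul_exp_neg_mul_sq hb (s := n)
    (neg_one_lt_zero.trans_le n.cast_nonneg)).norm.congr
    (Filter.Eventually.of_forall fun x => ?_)
  simp [Real.rpow_natCast]

noncomputable def fourierPreimageGaussian (x : ℝ) : ℂ := ((√π * Real.exp (-π ^ 2 * x ^ 2) : ℝ) : ℂ)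

lemma fourier_fourierPreimageGaussian :
    𝓕 fourierPreimageGaussian = fun t : ℝ => cexp (-(t : ℂ) ^ 2) := by
  have hG : fourierPreimageGaussian = (√π : ℂ) • fun x : ℝ => cexp (-π * π * x ^ 2) := by
    ext x
    simp only [fourierPreimageGaussian, Pi.smul_apply, smul_eq_mul]
    push_cast
    ring_nf
  ext t
  have h := congrFun (fourier_gaussian_pi (b := π) (by simp [Real.pi_pos])) t
  rw [Real.fourier_real_eq] at h ⊢
  simp_rw [hG, Pi.smul_apply, smul_comm _ (√π : ℂ), integral_smul, h]
  have hπ : (π : ℂ) ≠ 0 := ofReal_ne_zero.2 Real.pi_ne_zero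
  have hsqrt : (√π : ℂ) = (π : ℂ) ^ (1 / 2 : ℂ) := by
    rw [Real.sqrt_eq_rpow, ofReal_cpow Real.pi_pos.le]
    norm_num
  rw [smul_eq_mul, hsqrt, neg_div, div_self hπ, ← mul_assoc, mul_one_div_cancel (by simp [hπ])]
  ring_nf

lemma norm_fourierPreimageGaussian (x : ℝ) :
    ‖fourierPreimageGaussian x‖ = √π * Real.exp (-π ^ 2 * x ^ 2) := by
  rw [fourierPreimageGaussian, norm_real, Real.norm_of_nonneg (by positivity)]

lemma integrable_pow_smul_fourierPreimageGaussian (n : ℕ) :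
    Integrable fun x : ℝ => x ^ n • fourierPreimageGaussian x := by
  refine ((integrable_abs_pow_mul_exp_neg_mul_sq (b := π ^ 2) (by positivity) n).const_mul √π).mono'
    ?_ (Filter.Eventually.of_forall fun x => ?_)
  · unfold fourierPreimageGaussian
    fun_prop
  · rw [norm_smul, norm_fourierPreimageGaussian, norm_pow, Real.norm_eq_abs]
    exact le_of_eq (by ring)

lemma integral_norm_pow_smul_fourierPreimageGaussian_le (n : ℕ) :
    ∫ x : ℝ, ‖(-2 * π * I * x) ^ n • fourierPreimageGaussian x‖ ≤ √(2 ^ n * n !) := by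
  have hnorm (x : ℝ) : ‖(-2 * π * I * x) ^ n • fourierPreimageGaussian x‖ =
      (2 * π) ^ n * √π * (|x| ^ n * Real.exp (-π ^ 2 * x ^ 2)) := by
    rw [norm_smul, norm_fourierPreimageGaussian, norm_pow]
    simp only [neg_mul, norm_neg, Complex.norm_mul, norm_ofNat, norm_real, Real.norm_eq_abs,
      abs_of_pos Real.pi_pos, norm_I, mul_one]
    ring
  have hπ : (π ^ 2) ^ (-((n : ℝ) + 1) / 2) = (π ^ (n + 1))⁻¹ := by
    rw [← Real.rpow_natCast, ← Real.rpow_mul Real.pi_pos.le, ← Real.rpow_natCast,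
      ← Real.rpow_neg Real.pi_pos.le]
    push_cast
    ring_nf
  have hsqrtπ : √π ^ 2 = π := Real.sq_sqrt Real.pi_pos.le
  simp_rw [hnorm]
  rw [integral_const_mul, integral_abs_pow_mul_exp_neg_mul_sq (by positivity), hπ,
    Real.le_sqrt (by positivity) (by positivity)]
  calc ((2 * π) ^ n * √π * (Real.Gamma ((n + 1) / 2) * (π ^ (n + 1))⁻¹)) ^ 2
      = (2 ^ n) ^ 2 / π * Real.Gamma ((n + 1) / 2) ^ 2 := by
        field_simp
        rw [hsqrtπ]
        ring
    _ ≤ (2 ^ n) ^ 2 / π * (π * n ! / 2 ^ n) := by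
        gcongr
        exact Real.Gamma_succ_div_two_sq_le n
    _ = 2 ^ n * n ! := by field_simp

lemma norm_iteratedDeriv_cexp_neg_sq_le (n : ℕ) (t : ℝ) :
    ‖iteratedDeriv n (fun z : ℂ => cexp (-z ^ 2)) t‖ ≤ √(2 ^ n * n !) := by
  have hF : iteratedDeriv n (fun x : ℝ => cexp (-(x : ℂ) ^ 2)) =
      𝓕 fun x : ℝ => (-2 * π * I * x) ^ n • fourierPreimageGaussian x := by
    rw [← fourier_fourierPreimageGaussian]
    exact Real.iteratedDeriv_fourier (N := n)
      (fun k _ => integrable_pow_smul_fourierPreimageGaussian k) le_rfl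
  rw [← iteratedDeriv_comp_ofReal differentiable_cexp_neg_sq, hF]
  exact (VectorFourier.norm_fourierIntegral_le_integral_norm _ _ _ _ _).trans
    (integral_norm_pow_smul_fourierPreimageGaussian_le n)

lemma abs_hermiteFun_le (n : ℕ) (t : ℝ) : |hermiteFun n t| ≤ √(2 ^ n * n !) := by
  rw [hermiteFun_eq_re]
  refine (abs_re_le_norm _).trans ?_
  rw [norm_mul, norm_pow, norm_neg, norm_one, one_pow, one_mul]
  exact norm_iteratedDeriv_cexp_neg_sq_le n t

section Truncation

variable {ρ s : ℝ}

lemma abs_hermite_term_le (hs : √2 * |s| ≤ ρ) (n : ℕ) (t : ℝ) :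
    |s ^ n / n ! * hermiteFun n t| ≤ ρ ^ n / √(n ! : ℝ) := by
  calc |s ^ n / n ! * hermiteFun n t| ≤ |s| ^ n / n ! * √(2 ^ n * n !) := by
        rw [abs_mul, abs_div, abs_pow, Nat.abs_cast]
        gcongr
        exact abs_hermiteFun_le n t
    _ = (√2 * |s|) ^ n / √(n ! : ℝ) := by
        have h2 : √((2 : ℝ) ^ n) = √2 ^ n := by
          rw [← Real.sqrt_sq (by positivity : (0 : ℝ) ≤ √2 ^ n), ← pow_mul, mul_comm, pow_mul,
            Real.sq_sqrt zero_le_two]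
        have hsq : (n ! : ℝ) = √(n ! : ℝ) ^ 2 := (Real.sq_sqrt (by positivity)).symm
        rw [Real.sqrt_mul (by positivity), h2, mul_pow]
        nth_rewrite 1 [hsq]
        field_simp
    _ ≤ ρ ^ n / √(n ! : ℝ) := by gcongr

lemma abs_sum_range_hermite_term_le (hs : √2 * |s| ≤ ρ) (p : ℕ) (t : ℝ) :
    |∑ n ∈ range p, s ^ n / n ! * hermiteFun n t| ≤ ∑ n ∈ range p, ρ ^ n := by
  have hρ : 0 ≤ ρ := (by positivity : 0 ≤ √2 * |s|).trans hs
  refine (Finset.abs_sum_le_sum_abs _ _).trans (Finset.sum_le_sum fun n _ => ?_)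
  refine (abs_hermite_term_le hs n t).trans (div_le_self (by positivity) ?_)
  exact Real.one_le_sqrt.2 (by exact_mod_cast n.factorial_pos)

lemma abs_exp_sub_sum_range_hermite_term_le (hρ : ρ < 1) (hs : √2 * |s| ≤ ρ) (p : ℕ) (t : ℝ) :
    |Real.exp (-(t - s) ^ 2) - ∑ n ∈ range p, s ^ n / n ! * hermiteFun n t|
      ≤ ρ ^ p / √(p ! : ℝ) / (1 - ρ) := by
  have hρ0 : 0 ≤ ρ := le_trans (by positivity) hs
  have htail := (hasSum_nat_add_iff' p).2 (hasSum_hermiteFun t s)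
  rw [← htail.tsum_eq, div_eq_mul_inv, ← Real.norm_eq_abs]
  refine tsum_of_norm_bounded ((hasSum_geometric_of_lt_one hρ0 hρ).mul_left _) fun n => ?_
  refine (abs_hermite_term_le hs (n + p) t).trans ?_
  rw [pow_add, mul_comm (ρ ^ n), mul_div_right_comm]
  gcongr
  exact Nat.le_add_left p n

end Truncation

lemma abs_prod_sub_prod_le {ι : Type*} (s : Finset ι) {f g : ι → ℝ} {A E : ℝ}
    (hg : ∀ i ∈ s, |g i| ≤ A) (hfg : ∀ i ∈ s, |f i - g i| ≤ E) :
    |∏ i ∈ s, f i - ∏ i ∈ s, g i| ≤ (A + E) ^ #s - A ^ #s := by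
  induction s using Finset.cons_induction with
  | empty => simp
  | cons a s ha ih =>
    rw [Finset.forall_mem_cons] at hg hfg
    obtain ⟨hga, hg⟩ := hg
    obtain ⟨hfga, hfg⟩ := hfg
    have hA : 0 ≤ A := (abs_nonneg _).trans hga
    have hE : 0 ≤ E := (abs_nonneg _).trans hfga
    have hfa : |f a| ≤ A + E := by linarith [abs_sub_abs_le_abs_sub (f a) (g a)]
    have hgs : |∏ i ∈ s, g i| ≤ A ^ #s := by
      rw [Finset.abs_prod]
      exact (Finset.prod_le_prod (fun i _ => abs_nonneg _) hg).trans_eq (Finset.prod_const A)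
    have ih := ih hg hfg
    rw [Finset.prod_cons, Finset.prod_cons, Finset.card_cons]
    calc |f a * ∏ i ∈ s, f i - g a * ∏ i ∈ s, g i|
        = |f a * (∏ i ∈ s, f i - ∏ i ∈ s, g i) + (f a - g a) * ∏ i ∈ s, g i| := by ring_nf
      _ ≤ (A + E) * ((A + E) ^ #s - A ^ #s) + E * A ^ #s := by
        refine (abs_add_le _ _).trans ?_
        rw [abs_mul, abs_mul]
        gcongr
      _ = (A + E) ^ (#s + 1) - A ^ (#s + 1) := by ring

lemma add_pow_sub_pow_eq_sum_range {R : Type*} [CommRing R] (x y : R) (n : ℕ) :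
    (x + y) ^ n - x ^ n = ∑ k ∈ range n, (n.choose k : R) * x ^ k * y ^ (n - k) := by
  rw [add_pow, Finset.sum_range_succ, Nat.choose_self, Nat.sub_self, pow_zero, Nat.cast_one,
    mul_one, mul_one, add_sub_cancel_right]
  exact Finset.sum_congr rfl fun k _ => by ring

lemma abs_prod_sum_hermite_term_sub_prod_exp_le {ι : Type*} [Fintype ι] {ρ : ℝ} (hρ : ρ < 1)
    {s : ι → ℝ} (hs : ∀ i, √2 * |s i| ≤ ρ) (p : ℕ) (t : ι → ℝ) :
    |∏ i, ∑ n ∈ range p, s i ^ n / n ! * hermiteFun n (t i) - ∏ i, Real.exp (-(t i - s i) ^ 2)|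
      ≤ ((1 - ρ ^ p + ρ ^ p / √(p ! : ℝ)) / (1 - ρ)) ^ Fintype.card ι
        - ((1 - ρ ^ p) / (1 - ρ)) ^ Fintype.card ι := by
  have hgeom : ∑ n ∈ range p, ρ ^ n = (1 - ρ ^ p) / (1 - ρ) := by
    rw [geom_sum_eq hρ.ne, ← neg_div_neg_eq, neg_sub, neg_sub]
  rw [abs_sub_comm, add_div, ← Finset.card_univ]
  refine abs_prod_sub_prod_le _ (fun i _ => ?_) (fun i _ => ?_)
  · exact hgeom ▸ abs_sum_range_hermite_term_le (hs i) p (t i)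
  · exact abs_exp_sub_sum_range_hermite_term_le hρ (hs i) p (t i)

lemma sum_hermite_moment_mul_mPow_eq_prod {D : ℕ} (p : ℕ) (t x : Fin D → ℝ) :
    ∑ β : Fin D → Fin p,
        (-1 : ℝ) ^ mDeg (fun d => (β d : ℕ)) / (mFactorial (fun d => (β d : ℕ)) : ℝ)
          * hermiteFunMulti (fun d => (β d : ℕ)) t * mPow x (fun d => (β d : ℕ))
      = ∏ d, ∑ n ∈ range p, (-x d) ^ n / n ! * hermiteFun n (t d) := by
  simp_rw [← Fin.sum_univ_eq_sum_range (fun n => (-x _) ^ n / n ! * hermiteFun n (t _)),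
    Finset.prod_univ_sum, Fintype.piFinset_univ]
  refine Finset.sum_congr rfl fun β _ => ?_
  rw [mDeg, mFactorial, hermiteFunMulti, mPow, ← Finset.prod_pow_eq_pow_sum, Nat.cast_prod,
    ← Finset.prod_div_distrib, ← Finset.prod_mul_distrib, ← Finset.prod_mul_distrib]
  refine Finset.prod_congr rfl fun d _ => ?_
  rw [neg_pow]
  ring

theorem truncated_local_expansion_bound_general (D : ℕ)
    (h ρ : ℝ) (hh : 0 < h) (hρ1 : ρ < 1)
    (p : ℕ) (c : Fin D → ℝ)
    (N : ℕ) (r : Fin N → Fin D → ℝ)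
    (L : (Fin D → ℕ) → ℝ)
    (hL : ∀ β : Fin D → ℕ, L β =
      ∑ j, ((-1 : ℝ) ^ (mDeg β) / (mFactorial β : ℝ)) *
        hermiteFunMulti β (fun d => (c d - r j d) / Real.sqrt (2 * h ^ 2)))
    (q : Fin D → ℝ) (hq : ∀ d, |q d - c d| < ρ * h) :
    |(∑ β : Fin D → Fin p, L (fun d => (β d : ℕ)) *
        mPow (fun d => (q d - c d) / Real.sqrt (2 * h ^ 2)) (fun d => (β d : ℕ))) -
        ∑ j, Real.exp (-(∑ d, (q d - r j d) ^ 2) / (2 * h ^ 2))|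
      ≤ (N : ℝ) / (1 - ρ) ^ D *
        ∑ k ∈ Finset.range D, (D.choose k : ℝ) * (1 - ρ ^ p) ^ k *
          (ρ ^ p / Real.sqrt (Nat.factorial p)) ^ (D - k) := by
  set σ := √(2 * h ^ 2) with hσ
  set x : Fin D → ℝ := fun d => (q d - c d) / σ
  have hσ' : σ = √2 * h := by rw [hσ, Real.sqrt_mul zero_le_two, Real.sqrt_sq hh.le]
  have hx (d : Fin D) : √2 * |-x d| ≤ ρ := by
    rw [abs_neg, abs_div, abs_of_pos (by positivity : 0 < σ), hσ', ← mul_div_assoc,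
      mul_div_mul_left _ _ (by positivity), div_le_iff₀ hh]
    exact (hq d).le
  have hexp (j : Fin N) : Real.exp (-(∑ d, (q d - r j d) ^ 2) / (2 * h ^ 2))
      = ∏ d, Real.exp (-((c d - r j d) / σ - -x d) ^ 2) := by
    rw [← Real.exp_sum, neg_div, Finset.sum_div, ← Finset.sum_neg_distrib]
    refine congrArg _ (Finset.sum_congr rfl fun d _ => ?_)
    rw [sub_neg_eq_add, ← add_div, div_pow, hσ, Real.sq_sqrt (by positivity)]
    ring_nf
  have hsum : ∑ β : Fin D → Fin p, L (fun d => (β d : ℕ)) * mPow x (fun d => (β d : ℕ))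
      = ∑ j, ∏ d, ∑ n ∈ range p, (-x d) ^ n / n ! * hermiteFun n ((c d - r j d) / σ) := by
    simp_rw [hL, Finset.sum_mul]
    rw [Finset.sum_comm]
    exact Finset.sum_congr rfl fun j _ => sum_hermite_moment_mul_mPow_eq_prod p _ x
  rw [hsum, Finset.sum_congr rfl fun j _ => hexp j, ← Finset.sum_sub_distrib]
  calc _ ≤ ∑ _j : Fin N,
        (((1 - ρ ^ p + ρ ^ p / √(p ! : ℝ)) / (1 - ρ)) ^ D - ((1 - ρ ^ p) / (1 - ρ)) ^ D) := by
        refine (Finset.abs_sum_le_sum_abs _ _).trans (Finset.sum_le_sum fun j _ => ?_)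
        simpa using abs_prod_sum_hermite_term_sub_prod_exp_le hρ1 hx p fun d => (c d - r j d) / σ
    _ = _ := by
        rw [Finset.sum_const, Finset.card_univ, Fintype.card_fin, nsmul_eq_mul, div_pow, div_pow,
          ← sub_div, add_pow_sub_pow_eq_sum_range]
        ring

/-- Error bound for evaluating a truncated local expansion: with direct local
moments `L_β = Σ_j ((−1)^{|β|}/β!) h_β((c − r_j)/√(2h²))`, for every query point
`q` with `|q[d] − c[d]| < ρh` for all `d`,
`|Σ_{β < p} L_β ((q−c)/√(2h²))^β − Σ_j e^{−‖q−r_j‖²/(2h²)}|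
 ≤ (N/(1−ρ)^D) Σ_{k<D} C(D,k) (1−ρᵖ)ᵏ (ρᵖ/√(p!))^{D−k}`. -/
theorem truncated_local_expansion_bound (D : ℕ) (hD : 1 ≤ D)
    (h ρ : ℝ) (hh : 0 < h) (hρ0 : 0 < ρ) (hρ1 : ρ < 1)
    (p : ℕ) (hp : 1 ≤ p) (c : Fin D → ℝ)
    (N : ℕ) (r : Fin N → Fin D → ℝ)
    (L : (Fin D → ℕ) → ℝ)
    (hL : ∀ β : Fin D → ℕ, L β =
      ∑ j, ((-1 : ℝ) ^ (mDeg β) / (mFactorial β : ℝ)) *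
        hermiteFunMulti β (fun d => (c d - r j d) / Real.sqrt (2 * h ^ 2)))
    (q : Fin D → ℝ) (hq : ∀ d, |q d - c d| < ρ * h) :
    |(∑ β : Fin D → Fin p, L (fun d => (β d : ℕ)) *
        mPow (fun d => (q d - c d) / Real.sqrt (2 * h ^ 2)) (fun d => (β d : ℕ))) -
        ∑ j, Real.exp (-(∑ d, (q d - r j d) ^ 2) / (2 * h ^ 2))|
      ≤ (N : ℝ) / (1 - ρ) ^ D *
        ∑ k ∈ Finset.range D, (D.choose k : ℝ) * (1 - ρ ^ p) ^ k *
          (ρ ^ p / Real.sqrt (Nat.factorial p)) ^ (D - k) :=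
  truncated_local_expansion_bound_general D h ρ hh hρ1 p c N r L hL q hq
end
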